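/- Let p be an odd prime, χ a primitive Dirichlet character with values in ℂ_p whose conductor F is odd and divisible by p, and n a positive integer. Let ψ be the primitive Dirichlet character (with values in ℂ_p) associated to the product of χ with ω^{-n}, and let f' be its conductor. Then l_p(-n, χ) := Σ_{a=1, gcd(a,p)=1}^{F} χ(a)(-1)^a ⟨a⟩^{n} Σ_{j=0}^{n} C(n,j)(F/a)^j E_j equals (1 − ψ(p) p^n) · E_{n,ψ}, where E_{n,ψ} = (f')^n Σ_{b=0}^{f'-1} ψ(b)(-1)^b E_n(b/f'). -/

import Mathlib

/-- The Euler numbers `E₀ = 1`, `∑_{k=0}^{n} C(n,k) Eₖ + Eₙ = 0` for `n ≥ 1`. -/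
noncomputable def eulerNumber : ℕ → ℚ
  | 0 => 1
  | n + 1 => (-1/2) * ∑ k ∈ (Finset.range (n+1)).attach,
      ((n+1).choose k.1 : ℚ) * eulerNumber k.1
  decreasing_by exact Finset.mem_range.mp k.2

/-- The Euler polynomials `Eₙ(x) = ∑_{k=0}^n C(n,k) Eₖ x^{n-k}`. -/
noncomputable def eulerPoly (n : ℕ) (x : ℚ) : ℚ :=
  ∑ k ∈ Finset.range (n+1), (n.choose k : ℚ) * eulerNumber k * x ^ (n - k)

/-!
For `a` prime to `p`, the relation `χ(a) = ψ(a) ω(a)ⁿ` turns `χ(a) ⟨a⟩ⁿ` into `ψ(a) aⁿ`, and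
homogeneity turns `aⁿ ∑ⱼ C(n,j) (F/a)ʲ Eⱼ` into `Fⁿ Eₙ(a/F)`; if `a` is prime to `p` but not to
`F`, both `χ(a)` and `ψ(a)` vanish, because `χ` is trivial on `a ≡ 1 mod lcm(f', p)` and, being
primitive, has conductor `F = lcm(f', p)`. Removing the terms with `p ∣ a` from the full sum over
`a < F` leaves `ψ(p) pⁿ` times the same sum at level `F/p`. It remains to see that
`mⁿ ∑_{a<m} ψ(a) (-1)ᵃ Eₙ(a/m)` is the same for every odd multiple `m` of `f'`: this is the
multiplication formula `Eₙ(x) = rⁿ ∑_{i<r} (-1)ⁱ Eₙ((x+i)/r)` for odd `r`, which holds because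
both sides satisfy `P(x+1) + P(x) = 2xⁿ`, and this functional equation determines a polynomial.
-/

open Polynomial Finset

lemma Finset.sum_range_neg_one_pow_mul_add {R : Type*} [CommRing R] (f : ℕ → R) {r : ℕ}
    (hr : Odd r) : ∑ i ∈ range r, (-1) ^ i * (f (i + 1) + f i) = f r + f 0 := by
  calc _ = -∑ i ∈ range r, ((-1) ^ (i + 1) * f (i + 1) - (-1) ^ i * f i) := by
        rw [← sum_neg_distrib]; congr! 1; ring
    _ = f r + f 0 := by rw [sum_range_sub (fun i => (-1 : R) ^ i * f i), hr.neg_one_pow]; ring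

lemma Finset.sum_range_mul {M : Type*} [AddCommMonoid M] (g : ℕ → M) (m r : ℕ) :
    ∑ a ∈ range (m * r), g a = ∑ i ∈ range r, ∑ b ∈ range m, g (m * i + b) := by
  induction r with
  | zero => simp
  | succ r ih => rw [Nat.mul_succ, sum_range_add, ih, sum_range_succ]

lemma Finset.sum_range_mul_ite_dvd {M : Type*} [AddCommMonoid M] (g : ℕ → M) {p : ℕ} (hp : p ≠ 0)
    (m : ℕ) : ∑ a ∈ range (p * m), (if p ∣ a then g a else 0) = ∑ c ∈ range m, g (p * c) := by
  rw [sum_range_mul]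
  refine sum_congr rfl fun c _ => ?_
  rw [sum_eq_single_of_mem 0 (mem_range.mpr (Nat.pos_of_ne_zero hp))]
  · simp
  · intro b hb hb0
    exact if_neg fun hdvd => Nat.not_dvd_of_pos_of_lt (Nat.pos_of_ne_zero hb0) (mem_range.mp hb)
      ((Nat.dvd_add_right (dvd_mul_right p c)).mp hdvd)

lemma Finset.sum_Icc_one_eq_sum_range {M : Type*} [AddCommGroup M] (g : ℕ → M) {N : ℕ}
    (h : g N = g 0) : ∑ a ∈ Icc 1 N, g a = ∑ a ∈ range N, g a := by
  have hshift := sum_range_succ' g N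
  rw [sum_range_succ, h, add_left_inj] at hshift
  rw [← Finset.Ico_add_one_right_eq_Icc, sum_Ico_eq_sum_range, Nat.add_sub_cancel, hshift]
  simp_rw [add_comm 1]

lemma Polynomial.eq_of_comp_X_add_one_add_eq {R : Type*} [CommRing R] [IsDomain R] [CharZero R]
    {P Q : R[X]} (h : P.comp (X + 1) + P = Q.comp (X + 1) + Q) : P = Q := by
  have hneg : (P - Q).comp (X + 1) = -(P - Q) := by
    rw [sub_comp]; linear_combination h
  have hlc := congrArg leadingCoeff hneg
  rw [← C_1, leadingCoeff_comp (by rw [natDegree_X_add_C]; exact one_ne_zero), leadingCoeff_neg,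
    leadingCoeff_X_add_C, one_pow, mul_one, eq_neg_iff_add_eq_zero, ← two_mul, mul_eq_zero,
    leadingCoeff_eq_zero, sub_eq_zero] at hlc
  exact hlc.resolve_left two_ne_zero

lemma DirichletCharacter.IsPrimitive.eq_of_forall_modEq_one {R : Type*} [CommMonoidWithZero R]
    {F : ℕ} [NeZero F] {χ : DirichletCharacter R F} (hχ : χ.IsPrimitive) {d : ℕ} (hd : d ∣ F)
    (h : ∀ a : ℕ, a.Coprime F → a ≡ 1 [MOD d] → χ a = 1) : d = F := by
  have hfac : χ.FactorsThrough d := by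
    refine (factorsThrough_iff_ker_unitsMap hd).mpr fun u hu => ?_
    rw [MonoidHom.mem_ker] at hu ⊢
    have hval : ((u : ZMod F).val : ZMod d) = 1 := by
      rw [ZMod.natCast_val, ← ZMod.unitsMap_val hd, hu, Units.val_one]
    ext
    rw [MulChar.coe_toUnitHom, ← ZMod.natCast_zmod_val (u : ZMod F)]
    exact h _ (ZMod.val_coe_unit_coprime u)
      ((ZMod.natCast_eq_natCast_iff _ 1 d).mp (by rwa [Nat.cast_one]))
  exact le_antisymm (Nat.le_of_dvd (NeZero.pos F) hd) (hχ ▸ Nat.sInf_le hfac)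

namespace PadicInt

variable {p : ℕ} [Fact p.Prime]

lemma toZMod_eq_of_norm_sub_lt_one {x y : ℤ_[p]} (h : ‖x - y‖ < 1) : toZMod x = toZMod y := by
  rw [← sub_eq_zero, ← map_sub, ← RingHom.mem_ker, ker_toZMod, IsLocalRing.mem_maximalIdeal,
    mem_nonunits]
  exact h

lemma eq_one_of_pow_eq_one {x : ℤ_[p]} {k : ℕ} (hk : ¬p ∣ k) (hxk : x ^ k = 1)
    (hx : toZMod x = 1) : x = 1 := by
  have hsum : toZMod (∑ i ∈ range k, x ^ i) ≠ 0 := by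
    simpa [map_sum, hx, ZMod.natCast_eq_zero_iff] using hk
  have hgeom := geom_sum_mul x k
  rw [hxk, sub_self, mul_eq_zero] at hgeom
  exact sub_eq_zero.mp (hgeom.resolve_left fun h => hsum (by rw [h, map_zero]))

end PadicInt

lemma eulerNumber_succ (n : ℕ) :
    eulerNumber (n + 1) = -1 / 2 * ∑ k ∈ range (n + 1), ((n + 1).choose k : ℚ) * eulerNumber k := by
  rw [eulerNumber, sum_attach (range (n + 1)) fun k => ((n + 1).choose k : ℚ) * eulerNumber k]

lemma eulerPoly_zero (n : ℕ) : eulerPoly n 0 = eulerNumber n := by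
  rw [eulerPoly, sum_eq_single_of_mem n (self_mem_range_succ n)]
  · simp
  · intro k hk hkn
    have : n - k ≠ 0 := by have := mem_range.mp hk; omega
    simp [zero_pow this]

lemma eulerPoly_one_add_eulerNumber {n : ℕ} (hn : n ≠ 0) : eulerPoly n 1 + eulerNumber n = 0 := by
  obtain ⟨n, rfl⟩ := Nat.exists_eq_succ_of_ne_zero hn
  simp only [eulerPoly, one_pow, mul_one, sum_range_succ _ (n + 1), Nat.choose_self,
    Nat.cast_one, one_mul, eulerNumber_succ n]
  ring

noncomputable def eulerPolynomial (n : ℕ) : ℚ[X] :=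
  ∑ k ∈ range (n + 1), C ((n.choose k : ℚ) * eulerNumber k) * X ^ (n - k)

lemma eval_eulerPolynomial (n : ℕ) (x : ℚ) : (eulerPolynomial n).eval x = eulerPoly n x := by
  simp [eulerPolynomial, eulerPoly, eval_finsetSum]

lemma derivative_eulerPolynomial (n : ℕ) :
    derivative (eulerPolynomial (n + 1)) = (n + 1 : ℚ[X]) * eulerPolynomial n := by
  rw [eulerPolynomial, eulerPolynomial, derivative_sum, sum_range_succ, mul_sum]
  simp only [Nat.sub_self, pow_zero, mul_one, derivative_C, add_zero]
  refine sum_congr rfl fun k hk => ?_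
  have hk : k ≤ n := Nat.lt_succ_iff.mp (mem_range.mp hk)
  have hchoose := congrArg (Nat.cast (R := ℚ)) (Nat.choose_mul_succ_eq n k)
  push_cast [Nat.cast_sub (Nat.le_succ_of_le hk)] at hchoose
  rw [derivative_C_mul_X_pow, show n + 1 - k - 1 = n - k by omega,
    Nat.cast_sub (Nat.le_succ_of_le hk), ← mul_assoc]
  congr 1
  rw [show (n + 1 : ℚ[X]) = C (n + 1 : ℚ) by simp, ← C_mul]
  congr 1
  push_cast
  linear_combination (-eulerNumber k) * hchoose

lemma eulerPolynomial_comp_X_add_one_add (n : ℕ) :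
    (eulerPolynomial n).comp (X + 1) + eulerPolynomial n = 2 * X ^ n := by
  induction n with
  | zero => norm_num [eulerPolynomial, eulerNumber]
  | succ n ih =>
    rw [← sub_eq_zero]
    set D := (eulerPolynomial (n + 1)).comp (X + 1) + eulerPolynomial (n + 1) - 2 * X ^ (n + 1)
    have hD : derivative D = (n + 1 : ℚ[X]) *
        ((eulerPolynomial n).comp (X + 1) + eulerPolynomial n - 2 * X ^ n) := by
      simp only [D, derivative_sub, derivative_add, derivative_comp, derivative_eulerPolynomial,
        derivative_mul, derivative_X_pow, derivative_X, derivative_one, derivative_ofNat]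
      simp only [mul_comp, add_comp, natCast_comp, one_comp, Nat.cast_add, Nat.cast_one,
        map_add, map_natCast, map_one, add_tsub_cancel_right, one_mul, zero_mul, add_zero, zero_add]
      ring
    rw [eq_C_of_derivative_eq_zero (p := D) (by rw [hD, ih, sub_self, mul_zero]),
      coeff_zero_eq_eval_zero]
    simp [D, eval_eulerPolynomial, eulerPoly_zero, eulerPoly_one_add_eulerNumber]

lemma eulerPolynomial_eq_pow_mul_sum_comp {r : ℕ} (hr : Odd r) (n : ℕ) :
    eulerPolynomial n = (r : ℚ[X]) ^ n *
      ∑ i ∈ range r, (-1) ^ i * (eulerPolynomial n).comp (C (r : ℚ)⁻¹ * (X + (i : ℚ[X]))) := by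
  have hr0 : (r : ℚ) ≠ 0 := by exact_mod_cast hr.pos.ne'
  set f : ℕ → ℚ[X] := fun i => (eulerPolynomial n).comp (C (r : ℚ)⁻¹ * (X + (i : ℚ[X])))
  have hf : ∀ i, (f i).comp (X + 1) = f (i + 1) := fun i => by
    simp only [f, comp_assoc, mul_comp, C_comp, add_comp, X_comp, natCast_comp, Nat.cast_succ]
    ring_nf
  have hfr : f r + f 0 = 2 * (C (r : ℚ)⁻¹ * X) ^ n := by
    have : C (r : ℚ)⁻¹ * (X + (r : ℚ[X])) = (X + 1).comp (C (r : ℚ)⁻¹ * X) := by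
      rw [add_comp, X_comp, one_comp, mul_add, ← C_eq_natCast, ← C_mul, inv_mul_cancel₀ hr0, C_1]
    simp only [f, this, Nat.cast_zero, add_zero, ← comp_assoc, ← add_comp,
      eulerPolynomial_comp_X_add_one_add]
    simp
  symm
  apply eq_of_comp_X_add_one_add_eq
  calc ((r : ℚ[X]) ^ n * ∑ i ∈ range r, (-1) ^ i * f i).comp (X + 1)
          + (r : ℚ[X]) ^ n * ∑ i ∈ range r, (-1) ^ i * f i
      = (r : ℚ[X]) ^ n * ∑ i ∈ range r, (-1) ^ i * (f (i + 1) + f i) := by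
        simp only [mul_comp, Polynomial.sum_comp, pow_comp, natCast_comp, neg_comp, one_comp, hf,
          mul_add, sum_add_distrib]
    _ = C ((r : ℚ) ^ n) * (f r + f 0) := by
        rw [sum_range_neg_one_pow_mul_add f hr, C_pow, C_eq_natCast]
    _ = 2 * X ^ n := by
        have hinv : C ((r : ℚ) ^ n) * C ((r : ℚ)⁻¹ ^ n) = 1 := by
          rw [← C_mul, ← mul_pow, mul_inv_cancel₀ hr0, one_pow, C_1]
        rw [hfr, mul_pow, ← C_pow]
        linear_combination (2 * X ^ n) * hinv
    _ = _ := (eulerPolynomial_comp_X_add_one_add n).symm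

lemma eulerPoly_eq_pow_mul_sum {r : ℕ} (hr : Odd r) (n : ℕ) (x : ℚ) :
    eulerPoly n x = (r : ℚ) ^ n * ∑ i ∈ range r, (-1) ^ i * eulerPoly n ((x + i) / r) := by
  have := congrArg (eval x) (eulerPolynomial_eq_pow_mul_sum_comp hr n)
  simpa [eval_finsetSum, eval_eulerPolynomial, div_eq_inv_mul] using this

lemma pow_mul_eulerPoly_div (n : ℕ) {x y : ℚ} (hx : x ≠ 0) (hy : y ≠ 0) :
    y ^ n * eulerPoly n (x / y) =
      x ^ n * ∑ j ∈ range (n + 1), (n.choose j : ℚ) * (y / x) ^ j * eulerNumber j := by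
  rw [eulerPoly, mul_sum, mul_sum]
  refine sum_congr rfl fun j hj => ?_
  have hj : j ≤ n := Nat.lt_succ_iff.mp (mem_range.mp hj)
  rw [div_pow, div_pow, ← Nat.sub_add_cancel hj, pow_add, pow_add, Nat.add_sub_cancel]
  field_simp

section TwistedEulerSum

variable {K : Type*} [Field K] {N : ℕ}

/-- `E_{n,ψ}` of the statement is `twistedEulerSum ψ n f'`. -/
noncomputable def twistedEulerSum (ψ : DirichletCharacter K N) (n m : ℕ) : K :=
  (m : K) ^ n * ∑ a ∈ range m, ψ (a : ZMod N) * (-1 : K) ^ a * ((eulerPoly n ((a : ℚ) / m) : ℚ) : K)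

lemma twistedEulerSum_mul [CharZero K] (ψ : DirichletCharacter K N) (n : ℕ) (hN : Odd N) {r : ℕ}
    (hr : Odd r) : twistedEulerSum ψ n (N * r) = twistedEulerSum ψ n N := by
  have hN0 : (N : ℚ) ≠ 0 := by exact_mod_cast hN.pos.ne'
  have hr0 : (r : ℚ) ≠ 0 := by exact_mod_cast hr.pos.ne'
  simp only [twistedEulerSum]
  rw [sum_range_mul, sum_comm, mul_sum, mul_sum]
  refine sum_congr rfl fun b _ => ?_
  have hterm : ∀ i : ℕ, ψ ((N * i + b : ℕ) : ZMod N) * (-1 : K) ^ (N * i + b) *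
      ((eulerPoly n ((N * i + b : ℕ) / (N * r : ℕ)) : ℚ) : K)
      = ψ (b : ZMod N) * (-1) ^ b * (((-1) ^ i * eulerPoly n (((b : ℚ) / N + i) / r) : ℚ) : K) := by
    intro i
    have harg : ((N * i + b : ℕ) : ℚ) / (N * r : ℕ) = ((b : ℚ) / N + i) / r := by
      push_cast; field_simp; ring
    have hψ : ((N * i + b : ℕ) : ZMod N) = b := by simp
    rw [hψ, harg, pow_add, pow_mul, hN.neg_one_pow]
    push_cast
    ring
  rw [sum_congr rfl fun i _ => hterm i, ← mul_sum, ← Rat.cast_sum,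
    eulerPoly_eq_pow_mul_sum hr n (b / N)]
  push_cast
  ring

lemma twistedEulerSum_eq_of_dvd [CharZero K] (ψ : DirichletCharacter K N) (n : ℕ) {m : ℕ}
    (hNm : N ∣ m) (hm : Odd m) : twistedEulerSum ψ n m = twistedEulerSum ψ n N := by
  obtain ⟨r, rfl⟩ := hNm
  exact twistedEulerSum_mul ψ n (Nat.odd_mul.mp hm).1 (Nat.odd_mul.mp hm).2

lemma mul_sum_coprime_eq_twistedEulerSum_sub (ψ : DirichletCharacter K N) (n : ℕ) {p : ℕ}
    (hp : p.Prime) (hpo : Odd p) (m : ℕ) :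
    ((p * m : ℕ) : K) ^ n * ∑ a ∈ range (p * m), (if a.Coprime p then
        ψ (a : ZMod N) * (-1 : K) ^ a * ((eulerPoly n ((a : ℚ) / (p * m : ℕ)) : ℚ) : K) else 0)
      = twistedEulerSum ψ n (p * m) - ψ (p : ZMod N) * (p : K) ^ n * twistedEulerSum ψ n m := by
  have hsplit : ∀ (a : ℕ) (x : K), (if a.Coprime p then x else 0) = x - if p ∣ a then x else 0 := by
    intro a x
    by_cases hpa : p ∣ a <;> simp [hpa, Nat.coprime_comm, hp.coprime_iff_not_dvd]
  have hmul : ∀ c : ℕ, ψ ((p * c : ℕ) : ZMod N) * (-1 : K) ^ (p * c) *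
      ((eulerPoly n ((p * c : ℕ) / (p * m : ℕ)) : ℚ) : K)
      = ψ (p : ZMod N) * (ψ (c : ZMod N) * (-1) ^ c * ((eulerPoly n ((c : ℚ) / m) : ℚ) : K)) := by
    intro c
    have harg : ((p * c : ℕ) : ℚ) / (p * m : ℕ) = c / m := by
      push_cast
      exact mul_div_mul_left _ _ (by exact_mod_cast hp.ne_zero)
    rw [harg, Nat.cast_mul, map_mul, pow_mul, hpo.neg_one_pow]
    ring
  simp only [hsplit, sum_sub_distrib]
  rw [sum_range_mul_ite_dvd _ hp.ne_zero, sum_congr rfl fun c _ => hmul c, ← mul_sum]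
  simp only [twistedEulerSum]
  push_cast
  ring

end TwistedEulerSum

section Interpolation

variable {p : ℕ} [Fact p.Prime] {K : Type*} [Field K] [Algebra ℚ_[p] K] {F f' n : ℕ}

def IsTeichmullerLift (ω : ℕ → ℤ_[p]) : Prop :=
  ∀ a : ℕ, a.Coprime p → ω a ^ (p - 1) = 1 ∧ ‖ω a - (a : ℤ_[p])‖ < 1

def IsTeichmullerTwist (n : ℕ) (ω : ℕ → ℤ_[p]) (χ : DirichletCharacter K F)
    (ψ : DirichletCharacter K f') : Prop :=
  ∀ a : ℕ, a.Coprime F → ψ (a : ZMod f') * algebraMap ℚ_[p] K (ω a : ℚ_[p]) ^ n = χ (a : ZMod F)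

variable {ω : ℕ → ℤ_[p]} {χ : DirichletCharacter K F} {ψ : DirichletCharacter K f'}

lemma IsTeichmullerLift.eq_one (hω : IsTeichmullerLift ω) {a : ℕ} (ha : a ≡ 1 [MOD p]) :
    ω a = 1 := by
  have hp := (Fact.out : p.Prime).two_le
  obtain ⟨hpow, hnorm⟩ := hω a (by rw [Nat.Coprime, ha.gcd_eq, Nat.gcd_one_left])
  refine PadicInt.eq_one_of_pow_eq_one (Nat.not_dvd_of_pos_of_lt (by omega) (by omega)) hpow ?_
  rw [PadicInt.toZMod_eq_of_norm_sub_lt_one hnorm, map_natCast PadicInt.toZMod]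
  simpa using (ZMod.natCast_eq_natCast_iff a 1 p).mpr ha

lemma IsTeichmullerTwist.dvd_mul [NeZero F] (hψ : IsTeichmullerTwist n ω χ ψ)
    (hω : IsTeichmullerLift ω) (hχ : χ.IsPrimitive) (hpF : p ∣ F) (hf'F : f' ∣ F) :
    F ∣ f' * p := by
  have hlcm : f'.lcm p = F := by
    refine hχ.eq_of_forall_modEq_one (Nat.lcm_dvd hf'F hpF) fun a haF ha => ?_
    have hf' : (a : ZMod f') = 1 := by
      simpa using (ZMod.natCast_eq_natCast_iff a 1 f').mpr (ha.of_dvd (Nat.dvd_lcm_left f' p))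
    rw [← hψ a haF, hf', map_one, hω.eq_one (ha.of_dvd (Nat.dvd_lcm_right f' p))]
    simp
  exact hlcm ▸ Nat.lcm_dvd_mul f' p

lemma IsTeichmullerTwist.apply_mul_div_pow (hψ : IsTeichmullerTwist n ω χ ψ)
    (hω : IsTeichmullerLift ω) (hFf' : F ∣ f' * p) {a : ℕ} (hap : a.Coprime p) :
    χ (a : ZMod F) * algebraMap ℚ_[p] K (((a : ℚ_[p]) / (ω a : ℚ_[p])) ^ n)
      = ψ (a : ZMod f') * (a : K) ^ n := by
  by_cases haF : a.Coprime F
  · have hp := (Fact.out : p.Prime).two_le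
    have hω0 : algebraMap ℚ_[p] K (ω a : ℚ_[p]) ≠ 0 := by
      simpa using (IsUnit.of_pow_eq_one (hω a hap).1 (by omega)).ne_zero
    rw [← hψ a haF, map_pow, map_div₀, map_natCast (algebraMap ℚ_[p] K), div_pow]
    field_simp
  · have haf' : ¬a.Coprime f' := fun h => haF ((h.mul_right hap).coprime_dvd_right hFf')
    rw [χ.map_nonunit (by rwa [ZMod.isUnit_iff_coprime]),
      ψ.map_nonunit (by rwa [ZMod.isUnit_iff_coprime]), zero_mul, zero_mul]

lemma IsTeichmullerTwist.lpSummand_eq [CharZero K] (hψ : IsTeichmullerTwist n ω χ ψ)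
    (hω : IsTeichmullerLift ω) (hF : F ≠ 0) (hFf' : F ∣ f' * p) (a : ℕ) :
    (if a.Coprime p then
        χ (a : ZMod F) * (-1 : K) ^ a * algebraMap ℚ_[p] K (((a : ℚ_[p]) / (ω a : ℚ_[p])) ^ n) *
          ∑ j ∈ range (n + 1),
            (((n.choose j : ℚ) * ((F : ℚ) / (a : ℚ)) ^ j * eulerNumber j : ℚ) : K)
      else 0)
      = (F : K) ^ n * if a.Coprime p then
          ψ (a : ZMod f') * (-1 : K) ^ a * ((eulerPoly n ((a : ℚ) / F) : ℚ) : K) else 0 := by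
  split_ifs with hap
  · have ha0 : (a : ℚ) ≠ 0 := Nat.cast_ne_zero.mpr fun ha => (Fact.out : p.Prime).ne_one
      ((Nat.coprime_zero_left p).mp (ha ▸ hap))
    have key := congrArg (Rat.cast : ℚ → K) (pow_mul_eulerPoly_div n ha0 (Nat.cast_ne_zero.mpr hF))
    simp only [Rat.cast_mul, Rat.cast_pow, Rat.cast_natCast] at key
    rw [← Rat.cast_sum, mul_right_comm (χ _), hψ.apply_mul_div_pow hω hFf' hap]
    linear_combination -(ψ (a : ZMod f') * (-1 : K) ^ a) * key
  · simp

end Interpolation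

theorem lp_interpolation_general (p : ℕ) [Fact p.Prime] (hp : Odd p)
    (K : Type*) [Field K] [Algebra ℚ_[p] K]
    (F : ℕ) (hFodd : Odd F) (hpF : p ∣ F)
    (χ : DirichletCharacter K F) (hχ : χ.IsPrimitive)
    (n : ℕ)
    (ω : ℕ → ℤ_[p])
    (hω : ∀ a : ℕ, a.Coprime p → (ω a) ^ (p - 1) = 1 ∧ ‖ω a - (a : ℤ_[p])‖ < 1)
    (f' : ℕ) (hf'F : f' ∣ F) (ψ : DirichletCharacter K f')
    (hψ : ∀ a : ℕ, a.Coprime F →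
      ψ (a : ZMod f') * (algebraMap ℚ_[p] K ((ω a : ℚ_[p]))) ^ n = χ (a : ZMod F)) :
    ∑ a ∈ Finset.Icc 1 F,
        (if a.Coprime p then
          χ (a : ZMod F) * (-1 : K) ^ a *
            algebraMap ℚ_[p] K (((a : ℚ_[p]) / (ω a : ℚ_[p])) ^ n) *
            ∑ j ∈ Finset.range (n + 1),
              (((n.choose j : ℚ) * ((F : ℚ) / (a : ℚ)) ^ j * eulerNumber j : ℚ) : K)
        else 0) =
      (1 - ψ ((p : ℕ) : ZMod f') * (p : K) ^ n) *
        ((f' : K) ^ n *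
          ∑ b ∈ Finset.range f',
            ψ (b : ZMod f') * (-1 : K) ^ b * ((eulerPoly n ((b : ℚ) / f') : ℚ) : K)) := by
  have : CharZero K := charZero_of_injective_algebraMap (algebraMap ℚ_[p] K).injective
  have hp' : p.Prime := Fact.out
  have : NeZero F := ⟨hFodd.pos.ne'⟩
  have hψ' : IsTeichmullerTwist n ω χ ψ := hψ
  have hFf' : F ∣ f' * p := hψ'.dvd_mul hω hχ hpF hf'F
  obtain ⟨m, rfl⟩ := hpF
  have hm : Odd m := (Nat.odd_mul.mp hFodd).2
  have hψp :
      ψ (p : ZMod f') * twistedEulerSum ψ n m = ψ (p : ZMod f') * twistedEulerSum ψ n f' := by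
    by_cases hpf' : p ∣ f'
    · rw [ψ.map_nonunit (by rwa [ZMod.isUnit_iff_coprime, hp'.coprime_iff_not_dvd, not_not]),
        zero_mul, zero_mul]
    · have hf'm : f' ∣ m := ((hp'.coprime_iff_not_dvd.mpr hpf').symm).dvd_of_dvd_mul_left hf'F
      rw [twistedEulerSum_eq_of_dvd ψ n hf'm hm]
  calc _ = ((p * m : ℕ) : K) ^ n * ∑ a ∈ range (p * m), (if a.Coprime p then
          ψ (a : ZMod f') * (-1 : K) ^ a * ((eulerPoly n ((a : ℚ) / (p * m : ℕ)) : ℚ) : K)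
          else 0) := by
        rw [sum_Icc_one_eq_sum_range _ (by simp [Nat.coprime_mul_iff_left, hp'.ne_one]), mul_sum]
        exact sum_congr rfl fun a _ => hψ'.lpSummand_eq hω hFodd.pos.ne' hFf' a
    _ = twistedEulerSum ψ n (p * m) - ψ (p : ZMod f') * (p : K) ^ n * twistedEulerSum ψ n m :=
        mul_sum_coprime_eq_twistedEulerSum_sub ψ n hp' hp m
    _ = (1 - ψ (p : ZMod f') * (p : K) ^ n) * twistedEulerSum ψ n f' := by
        rw [twistedEulerSum_eq_of_dvd ψ n hf'F hFodd]
        linear_combination (-(p : K) ^ n) * hψp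

/-- Interpolation property of the `p`-adic `l`-function at negative integers.
Here `K` plays the role of `ℂ_p` (a field extension of `ℚ_p`), `χ` is a primitive
Dirichlet character of odd conductor `F` divisible by the odd prime `p`,
`ω a ∈ ℤ_p` is the Teichmüller lift of `a` (the unique `(p-1)`-st root of unity
congruent to `a` mod `p`), `⟨a⟩ = a/ω(a)`, and `ψ` is the primitive Dirichlet character
(of conductor `f'`) associated to the product of `χ` with `ω^{-n}`, characterized by
`ψ(a) ω(a)^n = χ(a)` for `a` coprime to `F`.  Then
`l_p(-n, χ) = ∑_{a=1, (a,p)=1}^{F} χ(a)(-1)^a ⟨a⟩^n ∑_{j=0}^{n} C(n,j)(F/a)^j E_j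
  = (1 − ψ(p) pⁿ) E_{n,ψ}`, with `E_{n,ψ} = (f')ⁿ ∑_{b=0}^{f'-1} ψ(b)(-1)^b Eₙ(b/f')`. -/
theorem lp_interpolation (p : ℕ) [Fact p.Prime] (hp : Odd p)
    (K : Type*) [Field K] [Algebra ℚ_[p] K]
    (F : ℕ) (hFodd : Odd F) (hpF : p ∣ F)
    (χ : DirichletCharacter K F) (hχ : χ.IsPrimitive)
    (n : ℕ) (hn : 0 < n)
    (ω : ℕ → ℤ_[p])
    (hω : ∀ a : ℕ, a.Coprime p → (ω a) ^ (p - 1) = 1 ∧ ‖ω a - (a : ℤ_[p])‖ < 1)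
    (f' : ℕ) (hf'F : f' ∣ F) (ψ : DirichletCharacter K f') (hψprim : ψ.IsPrimitive)
    (hψ : ∀ a : ℕ, a.Coprime F →
      ψ (a : ZMod f') * (algebraMap ℚ_[p] K ((ω a : ℚ_[p]))) ^ n = χ (a : ZMod F)) :
    ∑ a ∈ Finset.Icc 1 F,
        (if a.Coprime p then
          χ (a : ZMod F) * (-1 : K) ^ a *
            algebraMap ℚ_[p] K (((a : ℚ_[p]) / (ω a : ℚ_[p])) ^ n) *
            ∑ j ∈ Finset.range (n + 1),
              (((n.choose j : ℚ) * ((F : ℚ) / (a : ℚ)) ^ j * eulerNumber j : ℚ) : K)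
        else 0) =
      (1 - ψ ((p : ℕ) : ZMod f') * (p : K) ^ n) *
        ((f' : K) ^ n *
          ∑ b ∈ Finset.range f',
            ψ (b : ZMod f') * (-1 : K) ^ b * ((eulerPoly n ((b : ℚ) / f') : ℚ) : K)) :=
  lp_interpolation_general p hp K F hFodd hpF χ hχ n ω hω f' hf'F ψ hψ
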